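/- Suppose the eight components ψ_{ς₀ς₁ς₂}(t, s_ph, s_e1, s_e2) are C² on an open subset of ℝ⁴ and satisfy the equal-time evolution equations there. Then for each ς₂ ∈ {−1, +1} the component ψ_{(−1)(+1)ς₂} satisfies the derived second-order equation ((∂_ν − ς₂∂_{s_e2})² − ∂_{s_e1}²)ψ_{(−1)(+1)ς₂} + 2iω ∂_ν ψ_{(−1)(+1)(−ς₂)} = 0, where ∂_ν := ∂_t + ∂_{s_ph}. -/

import Mathlib

/-!
Write `L = ∂_ν − ς₂ ∂_{s_e2}` and `∂ = ∂_{s_e1}`, and `f = ψ_{(−1)(+1)ς₂}`. Its evolution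
equation reads `(L − ∂) f = −iω (ψ_{(−1)(−1)ς₂} + ψ_{(−1)(+1)(−ς₂)})`. Since second derivatives
of a `C²` function are symmetric, `L² − ∂² = (L + ∂)(L − ∂)` on `f`, so `(L² − ∂²) f` is
`−iω (L + ∂)` applied to the two partner components. The evolution equation of `ψ_{(−1)(−1)ς₂}` is
`(L + ∂) ψ_{(−1)(−1)ς₂} = −iω (f + ψ_{(−1)(−1)(−ς₂)})`, that of `ψ_{(−1)(+1)(−ς₂)}` is
`(2∂_ν − (L + ∂)) ψ_{(−1)(+1)(−ς₂)} = −iω (f + ψ_{(−1)(−1)(−ς₂)})`; the `ω²` terms cancel and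
`−2iω ∂_ν ψ_{(−1)(+1)(−ς₂)}` remains.
-/

open Complex

noncomputable section

/-- Partial derivative (in coordinate `i`) of a complex-valued function on `ℝⁿ`. -/
def pdC {n : ℕ} (i : Fin n) (f : (Fin n → ℝ) → ℂ) (x : Fin n → ℝ) : ℂ :=
  fderiv ℝ f x (Pi.single i 1)

/-- The null derivative `∂_ν = ∂_t + ∂_{s_ph}` (coordinates `(t, s_ph, s_e1, s_e2)`). -/
def Dnu (f : (Fin 4 → ℝ) → ℂ) (x : Fin 4 → ℝ) : ℂ := pdC 0 f x + pdC 1 f x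

open Topology

section SecondDerivative

variable {E F : Type*} [NormedAddCommGroup E] [NormedSpace ℝ E]
  [NormedAddCommGroup F] [NormedSpace ℝ F] {x : E}

theorem fderiv_fderiv_apply {f : E → F}
    (hf : DifferentiableAt ℝ (fderiv ℝ f) x) (v w : E) :
    fderiv ℝ (fun y => fderiv ℝ f y w) x v = fderiv ℝ (fderiv ℝ f) x v w := by
  simp [fderiv_clm_apply hf (differentiableAt_const w)]

theorem fderiv_fderiv_apply_add_sub {f : E → F} (hf : ContDiffAt ℝ 2 f x) (v w : E) :
    fderiv ℝ (fun y => fderiv ℝ f y (v - w)) x (v + w)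
      = fderiv ℝ (fun y => fderiv ℝ f y v) x v - fderiv ℝ (fun y => fderiv ℝ f y w) x w := by
  have hdf : DifferentiableAt ℝ (fderiv ℝ f) x :=
    (hf.fderiv_right le_rfl).differentiableAt one_ne_zero
  have hsymm := (hf.isSymmSndFDerivAt (by simp)) v w
  rw [fderiv_fderiv_apply hdf, fderiv_fderiv_apply hdf, fderiv_fderiv_apply hdf]
  simp only [map_add, map_sub, add_apply, hsymm]
  abel

theorem second_order_eq_of_coupled_first_order {f A B : E → ℂ} {v w ν : E} {c s : ℂ}
    (hf : ContDiffAt ℝ 2 f x) (hA : DifferentiableAt ℝ A x) (hB : DifferentiableAt ℝ B x)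
    (hfAB : (fun y => fderiv ℝ f y (v - w)) =ᶠ[𝓝 x] fun y => -c * (A y + B y))
    (hAs : fderiv ℝ A x (v + w) = -c * s)
    (hBs : fderiv ℝ B x ((2 : ℝ) • ν - (v + w)) = -c * s) :
    fderiv ℝ (fun y => fderiv ℝ f y v) x v - fderiv ℝ (fun y => fderiv ℝ f y w) x w
      + 2 * c * fderiv ℝ B x ν = 0 := by
  have hfAB' : fderiv ℝ (fun y => fderiv ℝ f y (v - w)) x (v + w)
      = -c * (fderiv ℝ A x (v + w) + fderiv ℝ B x (v + w)) := by
    rw [hfAB.fderiv_eq, fderiv_const_mul (hA.fun_add hB), fderiv_fun_add hA hB]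
    rfl
  rw [map_sub, map_smul, real_smul, ofReal_ofNat] at hBs
  rw [← fderiv_fderiv_apply_add_sub hf, hfAB']
  linear_combination -c * hAs + c * hBs

end SecondDerivative

theorem Dnu_eq_fderiv (f : (Fin 4 → ℝ) → ℂ) (x : Fin 4 → ℝ) :
    Dnu f x = fderiv ℝ f x (Pi.single 0 1 + Pi.single 1 1) := by
  rw [Dnu, pdC, pdC, map_add]

theorem Dnu_sub_mul_pdC_three (f : (Fin 4 → ℝ) → ℂ) (x : Fin 4 → ℝ) (ς : ℝ) :
    Dnu f x - (ς : ℂ) * pdC 3 f x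
      = fderiv ℝ f x (Pi.single 0 1 + Pi.single 1 1 - ς • Pi.single 3 1) := by
  rw [Dnu_eq_fderiv, pdC, map_sub, map_smul, real_smul]

theorem derived_second_order_equation_general
    (ω : ℝ)
    (U : Set (Fin 4 → ℝ)) (hU : IsOpen U)
    (ψ : ℝ → ℝ → ℝ → (Fin 4 → ℝ) → ℂ)
    (hreg : ∀ ς₀ ∈ ({-1, 1} : Set ℝ), ∀ ς₁ ∈ ({-1, 1} : Set ℝ), ∀ ς₂ ∈ ({-1, 1} : Set ℝ),
      ContDiffOn ℝ 2 (ψ ς₀ ς₁ ς₂) U)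
    (heq : ∀ ς₀ ∈ ({-1, 1} : Set ℝ), ∀ ς₁ ∈ ({-1, 1} : Set ℝ), ∀ ς₂ ∈ ({-1, 1} : Set ℝ),
      ∀ x ∈ U,
        pdC 0 (ψ ς₀ ς₁ ς₂) x - (ς₀ : ℂ) * pdC 1 (ψ ς₀ ς₁ ς₂) x
          - (ς₁ : ℂ) * pdC 2 (ψ ς₀ ς₁ ς₂) x - (ς₂ : ℂ) * pdC 3 (ψ ς₀ ς₁ ς₂) x
          + Complex.I * (ω : ℂ) * ψ ς₀ (-ς₁) ς₂ x
          + Complex.I * (ω : ℂ) * ψ ς₀ ς₁ (-ς₂) x = 0) :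
    ∀ ς₂ ∈ ({-1, 1} : Set ℝ), ∀ x ∈ U,
      (Dnu (fun y => Dnu (ψ (-1) 1 ς₂) y - (ς₂ : ℂ) * pdC 3 (ψ (-1) 1 ς₂) y) x
          - (ς₂ : ℂ) *
            pdC 3 (fun y => Dnu (ψ (-1) 1 ς₂) y - (ς₂ : ℂ) * pdC 3 (ψ (-1) 1 ς₂) y) x)
        - pdC 2 (fun y => pdC 2 (ψ (-1) 1 ς₂) y) x
        + 2 * Complex.I * (ω : ℂ) * Dnu (ψ (-1) 1 (-ς₂)) x = 0 := by
  intro ς₂ hς₂ x hx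
  have hneg : (-1 : ℝ) ∈ ({-1, 1} : Set ℝ) := by simp
  have hpos : (1 : ℝ) ∈ ({-1, 1} : Set ℝ) := by simp
  have hς₂' : -ς₂ ∈ ({-1, 1} : Set ℝ) := by rcases hς₂ with rfl | rfl <;> simp
  have hψ : ∀ a ∈ ({-1, 1} : Set ℝ), ∀ b ∈ ({-1, 1} : Set ℝ), ∀ c ∈ ({-1, 1} : Set ℝ),
      ContDiffAt ℝ 2 (ψ a b c) x := fun a ha b hb c hc =>
    (hreg a ha b hb c hc).contDiffAt (hU.mem_nhds hx)
  simp only [Dnu_sub_mul_pdC_three]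
  rw [Dnu_eq_fderiv, mul_assoc 2 I]
  refine second_order_eq_of_coupled_first_order (c := I * ω)
    (s := ψ (-1) 1 ς₂ x + ψ (-1) (-1) (-ς₂) x) (hψ _ hneg _ hpos _ hς₂)
    ((hψ _ hneg _ hneg _ hς₂).differentiableAt two_ne_zero)
    ((hψ _ hneg _ hpos _ hς₂').differentiableAt two_ne_zero) ?_ ?_ ?_
  all_goals simp only [map_add, map_sub, map_smul, real_smul, ofReal_ofNat]
  · filter_upwards [hU.mem_nhds hx] with y hy
    have := heq _ hneg _ hpos _ hς₂ y hy
    simp only [pdC, ofReal_neg, ofReal_one] at this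
    linear_combination this
  · have := heq _ hneg _ hneg _ hς₂ x hx
    simp only [pdC, neg_neg, ofReal_neg, ofReal_one] at this
    linear_combination this
  · have := heq _ hneg _ hpos _ hς₂' x hx
    simp only [pdC, neg_neg, ofReal_neg, ofReal_one] at this
    linear_combination this

/-- If the eight components are `C²` on an open set `U ⊆ ℝ⁴` and satisfy
the equal-time evolution equations there, then `ψ_{(−1)(+1)ς₂}` satisfies the derived
second-order equation `((∂_ν − ς₂∂_{s_e2})² − ∂_{s_e1}²)ψ_{(−1)(+1)ς₂}
  + 2iω∂_νψ_{(−1)(+1)(−ς₂)} = 0`. -/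
theorem derived_second_order_equation
    (hbar m_e ω : ℝ) (hhbar : 0 < hbar) (hm : 0 ≤ m_e) (hω : ω = m_e / hbar)
    (U : Set (Fin 4 → ℝ)) (hU : IsOpen U)
    (ψ : ℝ → ℝ → ℝ → (Fin 4 → ℝ) → ℂ)
    (hreg : ∀ ς₀ ∈ ({-1, 1} : Set ℝ), ∀ ς₁ ∈ ({-1, 1} : Set ℝ), ∀ ς₂ ∈ ({-1, 1} : Set ℝ),
      ContDiffOn ℝ 2 (ψ ς₀ ς₁ ς₂) U)
    (heq : ∀ ς₀ ∈ ({-1, 1} : Set ℝ), ∀ ς₁ ∈ ({-1, 1} : Set ℝ), ∀ ς₂ ∈ ({-1, 1} : Set ℝ),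
      ∀ x ∈ U,
        pdC 0 (ψ ς₀ ς₁ ς₂) x - (ς₀ : ℂ) * pdC 1 (ψ ς₀ ς₁ ς₂) x
          - (ς₁ : ℂ) * pdC 2 (ψ ς₀ ς₁ ς₂) x - (ς₂ : ℂ) * pdC 3 (ψ ς₀ ς₁ ς₂) x
          + Complex.I * (ω : ℂ) * ψ ς₀ (-ς₁) ς₂ x
          + Complex.I * (ω : ℂ) * ψ ς₀ ς₁ (-ς₂) x = 0) :
    ∀ ς₂ ∈ ({-1, 1} : Set ℝ), ∀ x ∈ U,
      (Dnu (fun y => Dnu (ψ (-1) 1 ς₂) y - (ς₂ : ℂ) * pdC 3 (ψ (-1) 1 ς₂) y) x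
          - (ς₂ : ℂ) *
            pdC 3 (fun y => Dnu (ψ (-1) 1 ς₂) y - (ς₂ : ℂ) * pdC 3 (ψ (-1) 1 ς₂) y) x)
        - pdC 2 (fun y => pdC 2 (ψ (-1) 1 ς₂) y) x
        + 2 * Complex.I * (ω : ℂ) * Dnu (ψ (-1) 1 (-ς₂)) x = 0 :=
  derived_second_order_equation_general ω U hU ψ hreg heq
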